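/- arXiv:1812.02099 — 2 statements merged into one kernel-verified Lean document; each statement's English description precedes it below -/
import Mathlib

section
/- If r : C → X(C) is a representation map for an ample concept class C, then r satisfies: (C1) for every c ∈ C, the cube of 2^X with support r(c) containing c is a cube of C; and (C2) for every cube B of C, there is a unique c ∈ B with r(c) ∩ supp(B) = ∅. -/
variable {X : Type} [Fintype X] [DecidableEq X]

/-- Hamming distance between two subsets of `X` (size of symmetric difference). -/
def hdist (c c' : Finset X) : ℕ := ((c \ c') ∪ (c' \ c)).card

/-- The restriction `C|Y = {c ∩ Y : c ∈ C}`. -/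
def restrictTo (C : Finset (Finset X)) (Y : Finset X) : Finset (Finset X) :=
  C.image (· ∩ Y)

/-- `Y` is shattered by `C`, i.e. `C|Y = 2^Y`. -/
def Shatters (C : Finset (Finset X)) (Y : Finset X) : Prop :=
  ∀ s ∈ Y.powerset, ∃ c ∈ C, c ∩ Y = s

instance (C : Finset (Finset X)) : DecidablePred (Shatters C) := fun _ => by
  unfold Shatters; infer_instance

/-- The family `X̄(C)` of all sets shattered by `C`. -/
def shatteredSets (C : Finset (Finset X)) : Finset (Finset X) :=
  Finset.univ.filter (Shatters C)

/-- The VC dimension of `C`: maximum size of a shattered set. -/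
def vcDim (C : Finset (Finset X)) : ℕ := (shatteredSets C).sup Finset.card

/-- `C` is ample: `|C| = |X̄(C)|`. -/
def IsAmple (C : Finset (Finset X)) : Prop := C.card = (shatteredSets C).card

/-- `C` is a maximum class of VC dimension `d`. -/
def IsMaximumClass (C : Finset (Finset X)) (d : ℕ) : Prop :=
  vcDim C = d ∧ C.card = ∑ i ∈ Finset.range (d + 1), (Fintype.card X).choose i

/-- `B` is a cube with support `Y`: `B = {t ∪ s : s ⊆ Y}` for some `t ⊆ X \ Y`. -/
def IsCubeS (B : Finset (Finset X)) (Y : Finset X) : Prop :=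
  ∃ t : Finset X, t ∩ Y = ∅ ∧ B = Y.powerset.image (fun s => t ∪ s)

/-- `B` is a cube. -/
def IsCube (B : Finset (Finset X)) : Prop := ∃ Y, IsCubeS B Y

/-- `B` is a cube of `C`: a cube contained in `C`. -/
def IsCubeOf (C B : Finset (Finset X)) : Prop := B ⊆ C ∧ IsCube B

/-- `B` is a maximal cube of `C` (maximal under inclusion among cubes of `C`). -/
def IsMaximalCubeOf (C B : Finset (Finset X)) : Prop :=
  IsCubeOf C B ∧ ∀ B', IsCubeOf C B' → B ⊆ B' → B = B'

/-- `c` is a corner of `C`: a concept of `C` belonging to a unique maximal cube of `C`. -/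
def IsCornerOf (C : Finset (Finset X)) (c : Finset X) : Prop :=
  c ∈ C ∧ ∃! B, IsMaximalCubeOf C B ∧ c ∈ B

/-- The one-inclusion graph `G(C)`. -/
def oneInclusionGraph (C : Finset (Finset X)) : SimpleGraph {c : Finset X // c ∈ C} where
  Adj c c' := hdist c.1 c'.1 = 1
  symm := by
    constructor
    intro a b h
    simpa [hdist, Finset.union_comm] using h
  loopless := by
    constructor
    intro a h
    simp [hdist] at h

/-- `C` is isometric: `G(C)` is connected and graph distances equal Hamming distances. -/
def IsIsometric (C : Finset (Finset X)) : Prop :=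
  (oneInclusionGraph C).Connected ∧
  ∀ c c' : {c : Finset X // c ∈ C}, (oneInclusionGraph C).dist c c' = hdist c.1 c'.1

/-- `C` is weakly isometric: `G(C)` is connected and graph distances equal Hamming
distances for pairs at Hamming distance at most 2. -/
def IsWeaklyIsometric (C : Finset (Finset X)) : Prop :=
  (oneInclusionGraph C).Connected ∧
  ∀ c c' : {c : Finset X // c ∈ C}, hdist c.1 c'.1 ≤ 2 →
    (oneInclusionGraph C).dist c c' = hdist c.1 c'.1

/-- A list of concepts is a corner peeling if it has no duplicates and each element is a
corner of the corresponding level set. -/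
def IsCornerPeeling (l : List (Finset X)) : Prop :=
  l.Nodup ∧ ∀ i (h : i < l.length), IsCornerOf ((l.take (i + 1)).toFinset) (l.get ⟨i, h⟩)

/-- `C` is dismantlable: it admits a corner peeling ordering of all its concepts. -/
def Dismantlable (C : Finset (Finset X)) : Prop :=
  ∃ l : List (Finset X), l.toFinset = C ∧ IsCornerPeeling l

/-- Non-clashing condition for a map `r`. -/
def NonClashing (C : Finset (Finset X)) (r : Finset X → Finset X) : Prop :=
  ∀ c ∈ C, ∀ c' ∈ C, c ≠ c' → c ∩ (r c ∪ r c') ≠ c' ∩ (r c ∪ r c')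

/-- `r` is a representation map for `C`: a non-clashing bijection from `C` onto `X̄(C)`. -/
def IsRepMap (C : Finset (Finset X)) (r : Finset X → Finset X) : Prop :=
  (∀ c ∈ C, r c ∈ shatteredSets C) ∧
  Set.InjOn r ↑C ∧
  (∀ Y ∈ shatteredSets C, ∃ c ∈ C, r c = Y) ∧
  NonClashing C r

/-- `C` admits an unlabeled sample compression scheme of size `k`. -/
def HasUSCS (C : Finset (Finset X)) (k : ℕ) : Prop :=
  ∃ (α : Finset X → Finset X → Finset X) (β : Finset X → Finset X),
    ∀ (Y : Finset X), ∀ c ∈ C,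
      α Y (c ∩ Y) ⊆ Y ∧ (α Y (c ∩ Y)).card ≤ k ∧
      β (α Y (c ∩ Y)) ∈ C ∧ β (α Y (c ∩ Y)) ∩ Y = c ∩ Y

/-- The cube of `2^X` with support `Y` containing `c`. -/
def cubeAt (c Y : Finset X) : Finset (Finset X) :=
  Y.powerset.image (fun s => (c \ Y) ∪ s)

/-- Condition (C1): for every `c ∈ C`, the cube with support `r c` containing `c`
is a cube of `C`. -/
def CondC1 (C : Finset (Finset X)) (r : Finset X → Finset X) : Prop :=
  ∀ c ∈ C, cubeAt c (r c) ⊆ C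

/-- Condition (C2): every cube of `C` has a unique concept `c` with `r c ∩ supp B = ∅`. -/
def CondC2 (C : Finset (Finset X)) (r : Finset X → Finset X) : Prop :=
  ∀ B Y, B ⊆ C → IsCubeS B Y → ∃! c, c ∈ B ∧ r c ∩ Y = ∅

/-- The facet of the cross-polytope corresponding to a subset `c ⊆ X`:
`+x ∈ σ_c` iff `x ∈ c` (where `+x = Sum.inl x` and `-x = Sum.inr x`). -/
def facet (c : Finset X) : Finset (X ⊕ X) :=
  c.image Sum.inl ∪ (Finset.univ \ c).image Sum.inr

/-- A list of facets of the cross-polytope is a partial shelling. -/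
def IsPartialShelling (L : List (Finset (X ⊕ X))) : Prop :=
  L.Nodup ∧ ∀ i j, i < j → j < L.length →
    ∃ k < j, ((L.getD k ∅) ∩ (L.getD j ∅)).card = Fintype.card X - 1 ∧
      (L.getD i ∅) ∩ (L.getD j ∅) ⊆ (L.getD k ∅) ∩ (L.getD j ∅)

/-- `Q` is an incomplete cube for `(C, D)` with support `σ`: a cube of `C` whose
support `σ` is a missed simplex (shattered by `C` but not by `D`). -/
def IsIncompleteCube (C D Q : Finset (Finset X)) (σ : Finset X) : Prop :=
  Q ⊆ C ∧ IsCubeS Q σ ∧ Shatters C σ ∧ ¬ Shatters D σ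

/-- `c` is the source of the incomplete cube `Q` with support `σ`:
`c ∈ Q` and `c ∩ σ ∉ D|σ`. -/
def IsSource (D Q : Finset (Finset X)) (σ : Finset X) (c : Finset X) : Prop :=
  c ∈ Q ∧ c ∩ σ ∉ restrictTo D σ

/-- The restriction `C_x = C|(X \ {x})`, with concepts viewed as subsets of `X`
avoiding `x`. -/
def restrictX (C : Finset (Finset X)) (x : X) : Finset (Finset X) :=
  C.image (·.erase x)

/-- The reduction `C^x = {c ⊆ X \ {x} : c ∈ C and c ∪ {x} ∈ C}`. -/
def reduction (C : Finset (Finset X)) (x : X) : Finset (Finset X) :=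
  C.filter (fun c => x ∉ c ∧ insert x c ∈ C)

/-- The interval `B(c,c') = {t : d(c,t) + d(t,c') = d(c,c')}`. -/
def interval (c c' : Finset X) : Finset (Finset X) :=
  Finset.univ.filter (fun t => hdist c t + hdist t c' = hdist c c')

/-- `C'` is convex in `C`. -/
def IsConvexIn (C C' : Finset (Finset X)) : Prop :=
  ∀ c ∈ C', ∀ c'' ∈ C', interval c c'' ∩ C ⊆ C'

/-- `C'` is locally convex in `C`. -/
def IsLocallyConvexIn (C C' : Finset (Finset X)) : Prop :=
  ∀ c ∈ C', ∀ c'' ∈ C', hdist c c'' = 2 → interval c c'' ∩ C ⊆ C'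

/-- `C` is a conditional antimatroid: contains `∅`, closed under intersection, and
every concept is generated by its extremal points. -/
def IsCondAntimatroid (C : Finset (Finset X)) : Prop :=
  ∅ ∈ C ∧ (∀ c ∈ C, ∀ c' ∈ C, c ∩ c' ∈ C) ∧
  ∀ c ∈ C, ∀ c' ∈ C, (c.filter (fun x => c.erase x ∈ C)) ⊆ c' → c ⊆ c'

/-
Non-clashing makes `u ↦ u \ Y` injective on the concepts whose representative avoids `Y`. Through
the bijection `r` these concepts are as many as the sets shattered by `C` that avoid `Y`, which are
the sets shattered by the trace `C.image (· \ Y)`; by the Sauer–Shelah–Pajor inequality the trace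
has at most that many elements. Hence every trace outside `Y` is realised by exactly one concept
whose representative avoids `Y`; on a cube of `C` with support `Y` this is (C2).

For (C1), let `D ⊆ r c` be minimal such that the cube at `c` with support `D` is not in `C`. Only
its corner `c ∆ D` can be missing, and the uniqueness above shows that for each `Y ⊆ D` exactly
`2 ^ #(D \ Y)` concepts `v` of the punctured cube have `r v` disjoint from `Y`, one fewer when
`Y = ∅`. Inclusion–exclusion then shows that no `v` in it has `D ⊆ r v`, yet `v = c` does.
-/

open Finset hiding Shatters
open scoped symmDiff

section FinsetAlgebra

variable {α : Type*} [DecidableEq α] {t u v S Y D : Finset α}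

lemma sdiff_eq_sdiff_iff_symmDiff_subset : u \ Y = v \ Y ↔ u ∆ v ⊆ Y := by
  simp only [Finset.ext_iff, subset_iff, mem_sdiff, mem_symmDiff]
  exact ⟨fun h a ha => by by_contra hY; have := h a; tauto,
    fun h a => by have := @h a; tauto⟩

lemma inter_sdiff_of_disjoint (u : Finset α) (h : Disjoint S Y) : S ∩ (u \ Y) = S ∩ u := by
  rw [← inter_sdiff_assoc, sdiff_eq_self_of_disjoint (h.mono_left inter_subset_left)]

lemma image_erase_eq_image {β : Type*} [DecidableEq β] {s : Finset α} {f : α → β} {a b : α}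
    (hb : b ∈ s) (hba : b ≠ a) (hf : f b = f a) : (s.erase a).image f = s.image f := by
  refine (image_subset_image (erase_subset a s)).antisymm fun w hw => ?_
  obtain ⟨x, hx, rfl⟩ := mem_image.1 hw
  by_cases hxa : x = a
  · subst hxa
    exact mem_image.2 ⟨b, mem_erase.2 ⟨hba, hb⟩, hf⟩
  · exact mem_image_of_mem f (mem_erase.2 ⟨hxa, hx⟩)

lemma mem_image_union_powerset (ht : Disjoint t Y) :
    u ∈ Y.powerset.image (t ∪ ·) ↔ u \ Y = t := by
  constructor
  · intro h
    obtain ⟨s, hs, rfl⟩ := mem_image.1 h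
    rw [union_sdiff_distrib, sdiff_eq_self_of_disjoint ht, sdiff_eq_empty_iff_subset.2
      (mem_powerset.1 hs), union_empty]
  · rintro rfl
    exact mem_image.2 ⟨u ∩ Y, mem_powerset.2 inter_subset_right, sdiff_union_inter u Y⟩

lemma card_image_union_powerset (ht : Disjoint t Y) :
    #(Y.powerset.image (t ∪ ·)) = 2 ^ #Y := by
  rw [card_image_of_injOn, card_powerset]
  intro s hs s' hs' h
  have key : ∀ s ∈ (Y.powerset : Set (Finset α)), (t ∪ s) ∩ Y = s := fun s hs => by
    rw [union_inter_distrib_right, disjoint_iff_inter_eq_empty.1 ht, empty_union,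
      inter_eq_left.2 (mem_powerset.1 hs)]
  rw [← key s hs, ← key s' hs']
  exact congrArg (· ∩ Y) h

lemma image_sdiff_image_union_powerset (ht : Disjoint t D) (hYD : Y ⊆ D) :
    (D.powerset.image (t ∪ ·)).image (· \ Y) = (D \ Y).powerset.image (t ∪ ·) := by
  have htY : Disjoint t Y := ht.mono_right hYD
  ext w
  simp only [image_image, mem_image, mem_powerset, Function.comp_apply, subset_sdiff]
  constructor
  · rintro ⟨s, hs, rfl⟩
    refine ⟨s \ Y, ⟨sdiff_subset.trans hs, sdiff_disjoint⟩, ?_⟩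
    rw [union_sdiff_distrib, sdiff_eq_self_of_disjoint htY]
  · rintro ⟨s, ⟨hs, hsY⟩, rfl⟩
    exact ⟨s, hs, sdiff_eq_self_of_disjoint (disjoint_union_left.2 ⟨htY, hsY⟩)⟩

end FinsetAlgebra

section InclusionExclusion

variable {ι α : Type*} [DecidableEq α]

lemma powerset_filter_disjoint (R D : Finset α) :
    {Y ∈ D.powerset | Disjoint R Y} = (D \ R).powerset := by
  ext Y
  simp only [mem_filter, mem_powerset, subset_sdiff, disjoint_comm]

lemma card_filter_subset_eq_sum (P : Finset ι) (ρ : ι → Finset α) (D : Finset α) :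
    (#{p ∈ P | D ⊆ ρ p} : ℤ) =
      ∑ Y ∈ D.powerset, (-1 : ℤ) ^ #Y * #{p ∈ P | Disjoint (ρ p) Y} := by
  simp only [card_filter, Nat.cast_sum, mul_sum]
  rw [sum_comm]
  refine sum_congr rfl fun p _ => ?_
  simp only [Nat.cast_ite, Nat.cast_one, Nat.cast_zero, mul_ite, mul_one, mul_zero]
  rw [← sum_filter, powerset_filter_disjoint, sum_powerset_neg_one_pow_card]
  simp only [sdiff_eq_empty_iff_subset]

lemma sum_neg_one_pow_mul_two_pow_sub (D : Finset α) :
    ∑ Y ∈ D.powerset, (-1 : ℤ) ^ #Y * (2 ^ #(D \ Y) - if Y = ∅ then 1 else 0) = 0 := by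
  simp only [mul_sub, sum_sub_distrib, mul_ite, mul_one, mul_zero, sum_ite_eq',
    empty_mem_powerset, if_true, card_empty, pow_zero]
  rw [sum_congr rfl fun Y hY => by rw [card_sdiff_of_subset (mem_powerset.1 hY)],
    sum_pow_mul_eq_add_pow]
  norm_num

end InclusionExclusion

section CubeAt

variable {α : Type} [DecidableEq α] {c u m D Y : Finset α}

lemma mem_cubeAt : u ∈ cubeAt c D ↔ u ∆ c ⊆ D := by
  rw [cubeAt, mem_image_union_powerset sdiff_disjoint, sdiff_eq_sdiff_iff_symmDiff_subset]

lemma card_cubeAt : #(cubeAt c D) = 2 ^ #D :=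
  card_image_union_powerset sdiff_disjoint

lemma card_image_sdiff_erase_cubeAt (hm : m ∈ cubeAt c D) (hYD : Y ⊆ D) :
    (#(((cubeAt c D).erase m).image (· \ Y)) : ℤ) = 2 ^ #(D \ Y) - if Y = ∅ then 1 else 0 := by
  obtain rfl | ⟨y, hy⟩ := Y.eq_empty_or_nonempty
  · simp only [sdiff_empty, image_id', card_erase_of_mem hm, card_cubeAt, if_true]
    rw [Nat.cast_sub Nat.one_le_two_pow]
    push_cast
    rfl
  · have hpartner : m ∆ {y} ∈ cubeAt c D := by
      rw [mem_cubeAt] at hm ⊢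
      refine (symmDiff_triangle _ m _).trans (union_subset ?_ hm)
      rw [symmDiff_comm, symmDiff_symmDiff_cancel_left]
      exact singleton_subset_iff.2 (hYD hy)
    have hne : m ∆ {y} ≠ m := by
      rw [Ne, symmDiff_eq_left]
      exact singleton_ne_empty y
    have hsame : (m ∆ {y}) \ Y = m \ Y := by
      rw [sdiff_eq_sdiff_iff_symmDiff_subset, symmDiff_comm, symmDiff_symmDiff_cancel_left]
      exact singleton_subset_iff.2 hy
    rw [image_erase_eq_image hpartner hne hsame, cubeAt,
      image_sdiff_image_union_powerset sdiff_disjoint hYD,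
      card_image_union_powerset (disjoint_of_subset_right sdiff_subset sdiff_disjoint),
      if_neg (nonempty_iff_ne_empty.1 ⟨y, hy⟩)]
    push_cast
    ring

end CubeAt

section Shattering

variable {α : Type*} [DecidableEq α] {C : Finset (Finset α)} {S Y : Finset α}

lemma shatters_image_sdiff_iff :
    (C.image (· \ Y)).Shatters S ↔ C.Shatters S ∧ Disjoint S Y := by
  constructor
  · intro h
    have hSY : Disjoint S Y := by
      obtain ⟨_, hu, hSu⟩ := h.exists_superset
      obtain ⟨u, -, rfl⟩ := mem_image.1 hu
      exact disjoint_of_subset_left hSu sdiff_disjoint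
    refine ⟨fun t ht => ?_, hSY⟩
    obtain ⟨_, hw, rfl⟩ := h ht
    obtain ⟨u, hu, rfl⟩ := mem_image.1 hw
    exact ⟨u, hu, (inter_sdiff_of_disjoint u hSY).symm⟩
  · rintro ⟨h, hSY⟩ t ht
    obtain ⟨u, hu, rfl⟩ := h ht
    exact ⟨u \ Y, mem_image_of_mem _ hu, inter_sdiff_of_disjoint u hSY⟩

lemma shatterer_image_sdiff :
    (C.image (· \ Y)).shatterer = {S ∈ C.shatterer | Disjoint S Y} := by
  ext S
  simp only [mem_shatterer, mem_filter, shatters_image_sdiff_iff]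

end Shattering

section NonClashing

variable {α : Type} [DecidableEq α] {C : Finset (Finset α)} {r : Finset α → Finset α}

lemma NonClashing.injOn_sdiff (h : NonClashing C r) (Y : Finset α) :
    Set.InjOn (· \ Y) (C.filter fun u => Disjoint (r u) Y : Finset (Finset α)) := by
  intro u hu v hv huv
  rw [mem_coe, mem_filter] at hu hv
  by_contra hne
  have hW : Disjoint (r u ∪ r v) Y := disjoint_union_left.2 ⟨hu.2, hv.2⟩
  apply h u hu.1 v hv.1 hne
  rw [inter_comm u, inter_comm v, ← inter_sdiff_of_disjoint u hW,
    ← inter_sdiff_of_disjoint v hW]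
  exact congrArg _ huv

end NonClashing

lemma shatteredSets_eq_shatterer (C : Finset (Finset X)) : shatteredSets C = C.shatterer := by
  ext Y
  simp only [shatteredSets, Shatters, Finset.Shatters, mem_filter, mem_univ, true_and,
    mem_shatterer, mem_powerset, inter_comm Y]

namespace IsRepMap

variable {C : Finset (Finset X)} {r : Finset X → Finset X}

lemma card_filter_disjoint (hr : IsRepMap C r) (Y : Finset X) :
    #{u ∈ C | Disjoint (r u) Y} = #{S ∈ C.shatterer | Disjoint S Y} := by
  obtain ⟨hmaps, hinj, hsurj, -⟩ := hr
  rw [← card_image_of_injOn (hinj.mono (coe_subset.2 (filter_subset _ C)))]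
  congr 1
  ext S
  simp only [mem_image, mem_filter, ← shatteredSets_eq_shatterer]
  constructor
  · rintro ⟨u, ⟨hu, huY⟩, rfl⟩
    exact ⟨hmaps u hu, huY⟩
  · rintro ⟨hS, hSY⟩
    obtain ⟨u, hu, rfl⟩ := hsurj S hS
    exact ⟨u, ⟨hu, hSY⟩, rfl⟩

lemma image_sdiff_filter_disjoint (hr : IsRepMap C r) (Y : Finset X) :
    {u ∈ C | Disjoint (r u) Y}.image (· \ Y) = C.image (· \ Y) := by
  refine eq_of_subset_of_card_le (image_subset_image (filter_subset _ C)) ?_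
  calc #(C.image (· \ Y))
      ≤ #(C.image (· \ Y)).shatterer := card_le_card_shatterer _
    _ = #{u ∈ C | Disjoint (r u) Y} := by
      rw [shatterer_image_sdiff, hr.card_filter_disjoint]
    _ = #({u ∈ C | Disjoint (r u) Y}.image (· \ Y)) :=
      (card_image_of_injOn (hr.2.2.2.injOn_sdiff Y)).symm

lemma card_filter_disjoint_eq_card_image (hr : IsRepMap C r) {F : Finset (Finset X)}
    {Y : Finset X} (hFC : F ⊆ C) (hF : ∀ u ∈ C, ∀ v ∈ F, u \ Y = v \ Y → u ∈ F) :
    #{v ∈ F | Disjoint (r v) Y} = #(F.image (· \ Y)) := by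
  rw [← card_image_of_injOn ((hr.2.2.2.injOn_sdiff Y).mono
    (coe_subset.2 (filter_subset_filter _ hFC)))]
  refine congrArg card ((image_subset_image (filter_subset _ F)).antisymm fun w hw => ?_)
  obtain ⟨v, hv, rfl⟩ := mem_image.1 hw
  have hvY : v \ Y ∈ {u ∈ C | Disjoint (r u) Y}.image (· \ Y) := by
    rw [hr.image_sdiff_filter_disjoint]
    exact mem_image_of_mem _ (hFC hv)
  obtain ⟨u, hu, huv⟩ := mem_image.1 hvY
  rw [mem_filter] at hu
  exact mem_image.2 ⟨u, mem_filter.2 ⟨hF u hu.1 v hv huv, hu.2⟩, huv⟩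

theorem condC2 (hr : IsRepMap C r) : CondC2 C r := by
  rintro B Y hBC ⟨t, htY, rfl⟩
  have ht : Disjoint t Y := disjoint_iff_inter_eq_empty.2 htY
  have himage : (Y.powerset.image (t ∪ ·)).image (· \ Y) = {t} := by
    refine eq_singleton_iff_unique_mem.2 ⟨?_, fun w hw => ?_⟩
    · exact mem_image.2 ⟨t, (mem_image_union_powerset ht).2 (sdiff_eq_self_of_disjoint ht),
        sdiff_eq_self_of_disjoint ht⟩
    · obtain ⟨v, hv, rfl⟩ := mem_image.1 hw
      exact (mem_image_union_powerset ht).1 hv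
  have hcard := hr.card_filter_disjoint_eq_card_image hBC fun u _ v hv huv =>
    (mem_image_union_powerset ht).2 (huv.trans ((mem_image_union_powerset ht).1 hv))
  rw [himage, card_singleton, card_eq_one] at hcard
  obtain ⟨c, hc⟩ := hcard
  simp only [eq_singleton_iff_unique_mem, mem_filter, disjoint_iff_inter_eq_empty] at hc
  exact ⟨c, hc.1, fun u hu => hc.2 u hu⟩

theorem cubeAt_subset (hr : IsRepMap C r) {c : Finset X} (hc : c ∈ C) {D : Finset X}
    (hD : D ⊆ r c) : cubeAt c D ⊆ C := by
  induction D using Finset.strongInduction with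
  | H D ih =>
  have hK : (cubeAt c D).erase (c ∆ D) ⊆ C := by
    intro u hu
    obtain ⟨hum, hu⟩ := mem_erase.1 hu
    have hss : u ∆ c ⊂ D := ssubset_of_subset_of_ne (mem_cubeAt.1 hu) fun h => hum (by
      rw [← h, symmDiff_comm u, symmDiff_symmDiff_cancel_left])
    exact ih _ hss (hss.subset.trans hD) (mem_cubeAt.2 subset_rfl)
  have hmK : c ∆ D ∈ cubeAt c D := by
    rw [mem_cubeAt, symmDiff_comm, symmDiff_symmDiff_cancel_left]
  intro u hu
  by_cases hum : u = c ∆ D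
  swap
  · exact hK (mem_erase.2 ⟨hum, hu⟩)
  subst hum
  by_contra hm
  set F := (cubeAt c D).erase (c ∆ D)
  have hclosed : ∀ Y ⊆ D, ∀ u ∈ C, ∀ v ∈ F, u \ Y = v \ Y → u ∈ F := by
    intro Y hYD u hu v hv huv
    have hvK := mem_cubeAt.1 (mem_of_mem_erase hv)
    rw [sdiff_eq_sdiff_iff_symmDiff_subset] at huv
    refine mem_erase.2 ⟨fun h => hm (h ▸ hu), mem_cubeAt.2 ?_⟩
    exact (symmDiff_triangle _ v _).trans (union_subset (huv.trans hYD) hvK)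
  have hcount : ∀ Y ∈ D.powerset, (#{v ∈ F | Disjoint (r v) Y} : ℤ) =
      2 ^ #(D \ Y) - if Y = ∅ then 1 else 0 := fun Y hY => by
    rw [hr.card_filter_disjoint_eq_card_image hK (hclosed Y (mem_powerset.1 hY))]
    exact card_image_sdiff_erase_cubeAt hmK (mem_powerset.1 hY)
  have hcF : c ∈ {v ∈ F | D ⊆ r v} :=
    mem_filter.2 ⟨mem_erase.2 ⟨fun h => hm (h ▸ hc), mem_cubeAt.2 (by simp)⟩, hD⟩
  have hzero := card_filter_subset_eq_sum F r D
  rw [sum_congr rfl fun Y hY => by rw [hcount Y hY], sum_neg_one_pow_mul_two_pow_sub] at hzero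
  exact (card_pos.2 ⟨c, hcF⟩).ne' (by exact_mod_cast hzero)

end IsRepMap

theorem stmt_16_general (C : Finset (Finset X)) (r : Finset X → Finset X)
    (hr : IsRepMap C r) : CondC1 C r ∧ CondC2 C r :=
  ⟨fun _ hc => hr.cubeAt_subset hc subset_rfl, hr.condC2⟩

/-- Any representation map of an ample class satisfies conditions
(C1) and (C2). -/
theorem stmt_16 (C : Finset (Finset X)) (hC : IsAmple C) (r : Finset X → Finset X)
    (hr : IsRepMap C r) : CondC1 C r ∧ CondC2 C r :=
  stmt_16_general C r hr
end

section
/- An ample concept class C admits a corner peeling if and only if there exists a map r : C → 2^X satisfying conditions (C1) and (C2) whose induced orientation o_r of the one-inclusion graph G(C) is acyclic, where the x-edge cc' of G(C) is directed from c to c' if and only if x ∈ r(c). -/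
variable {X : Type} [Fintype X] [DecidableEq X]

/-!
Forward direction: given a corner peeling, let `r c` be the support of the unique maximal cube
at `c` in the level set of `c`. Every edge is then directed from its later to its earlier end, so
the orientation is acyclic and (C1) holds by construction. The sink of a cube `B` of `C` is its
first concept `v`; no later concept `v'` of `B` can be a sink, because the level set of `v'` is
ample (removing a corner keeps a class ample) and in an ample class a concept has a neighbour in
every subcube through it that contains a second concept.

Backward direction: by (C2) the orientation restricted to any cube is a unique sink orientation,
so by counting it also has a unique source. A source `c` of the acyclic orientation of `G(C)` is
therefore a corner, with maximal cube `cubeAt c (r c)`, and `r` still satisfies (C1) and (C2) on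
`C \ {c}`. Peeling off sources one at a time yields a corner peeling, read backwards.
-/

open Finset
open scoped symmDiff

section Cubes

variable {α : Type} [DecidableEq α]

theorem symmDiff_singleton_ne (c : Finset α) (x : α) : c ∆ {x} ≠ c :=
  symmDiff_eq_left.not.2 (singleton_ne_empty x)

theorem symmDiff_eq_iff_eq_symmDiff {a b s : Finset α} : a ∆ b = s ↔ b = a ∆ s := by
  rw [← symmDiff_right_inj (a := a) (b := b), symmDiff_symmDiff_cancel_left]

theorem mem_cubeAt_s18 {c Y d : Finset α} : d ∈ cubeAt c Y ↔ c ∆ d ⊆ Y := by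
  simp only [cubeAt, mem_image, mem_powerset, subset_iff, mem_symmDiff]
  constructor
  · rintro ⟨s, hsY, rfl⟩ x hx
    have := @hsY x
    simp only [mem_union, mem_sdiff] at hx
    tauto
  · intro h
    refine ⟨d ∩ Y, fun _ hx ↦ (mem_inter.1 hx).2, ?_⟩
    ext x
    have := @h x
    simp only [mem_union, mem_sdiff, mem_inter]
    tauto

theorem self_mem_cubeAt (c Y : Finset α) : c ∈ cubeAt c Y := by
  simp [mem_cubeAt_s18]

theorem symmDiff_singleton_mem_cubeAt {c Y : Finset α} {x : α} :
    c ∆ {x} ∈ cubeAt c Y ↔ x ∈ Y := by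
  rw [mem_cubeAt_s18, symmDiff_symmDiff_cancel_left, singleton_subset_iff]

theorem cubeAt_subset_cubeAt_iff {c S Y : Finset α} : cubeAt c S ⊆ cubeAt c Y ↔ S ⊆ Y := by
  refine ⟨fun h x hx ↦ symmDiff_singleton_mem_cubeAt.1 (h (symmDiff_singleton_mem_cubeAt.2 hx)),
    fun h d hd ↦ mem_cubeAt_s18.2 ((mem_cubeAt_s18.1 hd).trans h)⟩

theorem symmDiff_subset_of_mem_cubeAt {c Y v w : Finset α} (hv : v ∈ cubeAt c Y)
    (hw : w ∈ cubeAt c Y) : v ∆ w ⊆ Y :=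
  (symmDiff_triangle v c w).trans <|
    union_subset (symmDiff_comm c v ▸ mem_cubeAt_s18.1 hv) (mem_cubeAt_s18.1 hw)

theorem cubeAt_subset_of_mem {c d S Y : Finset α} (hd : d ∈ cubeAt c Y) (hS : S ⊆ Y) :
    cubeAt d S ⊆ cubeAt c Y := fun e he ↦
  mem_cubeAt_s18.2 <| (symmDiff_triangle c d e).trans <|
    union_subset (mem_cubeAt_s18.1 hd) ((mem_cubeAt_s18.1 he).trans hS)

theorem mem_cubeAt_sdiff_iff {c Y T v w : Finset α} (hv : v ∈ cubeAt c Y) (hw : w ∈ cubeAt c Y) :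
    w ∈ cubeAt v (Y \ T) ↔ v ∩ T = w ∩ T := by
  have hvw := symmDiff_subset_of_mem_cubeAt hv hw
  rw [mem_cubeAt_s18, Finset.ext_iff]
  simp only [subset_iff, mem_symmDiff, mem_sdiff, mem_inter] at hvw ⊢
  refine ⟨fun h y ↦ ?_, fun h y hy ↦ ?_⟩
  · have := @h y
    have := @hvw y
    tauto
  · have := h y
    have := @hvw y
    tauto

theorem cubeAt_singleton (c : Finset α) (x : α) : cubeAt c {x} = {c, c ∆ {x}} := by
  ext d
  rw [mem_cubeAt_s18, subset_singleton_iff, symmDiff_eq_empty, mem_insert, mem_singleton,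
    eq_comm (a := c), ← symmDiff_right_inj (a := c) (b := d) (c := c ∆ {x}),
    symmDiff_symmDiff_cancel_left]

theorem isCubeS_cubeAt (c Y : Finset α) : IsCubeS (cubeAt c Y) Y :=
  ⟨c \ Y, sdiff_inter_self _ _, rfl⟩

theorem isCubeS_iff_eq_cubeAt {B : Finset (Finset α)} {c Y : Finset α} (hc : c ∈ B) :
    IsCubeS B Y ↔ B = cubeAt c Y := by
  refine ⟨?_, fun h ↦ h ▸ isCubeS_cubeAt c Y⟩
  rintro ⟨t, htY, rfl⟩
  obtain ⟨s, hsY, rfl⟩ := mem_image.1 hc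
  have : (t ∪ s) \ Y = t := by
    rw [union_sdiff_distrib, sdiff_eq_empty_iff_subset.2 (mem_powerset.1 hsY), union_empty,
      Finset.sdiff_eq_self_iff_disjoint, disjoint_iff_inter_eq_empty, htY]
  rw [cubeAt, this]

end Cubes

section Corners

variable {α : Type} [DecidableEq α] {C : Finset (Finset α)} {c : Finset α}

theorem IsCubeOf.exists_isMaximalCubeOf {Q : Finset (Finset α)} (hQ : IsCubeOf C Q) :
    ∃ B, IsMaximalCubeOf C B ∧ Q ⊆ B := by
  classical
  obtain ⟨B, hQB, hB⟩ := ({B ∈ C.powerset | IsCubeOf C B}).exists_le_maximal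
    (mem_filter.2 ⟨mem_powerset.2 hQ.1, hQ⟩)
  refine ⟨B, ⟨(mem_filter.1 hB.prop).2, fun B' hB' hBB' ↦ ?_⟩, hQB⟩
  exact le_antisymm hBB' (hB.2 (mem_filter.2 ⟨mem_powerset.2 hB'.1, hB'⟩) hBB')

theorem isCubeOf_iff_of_mem {B : Finset (Finset α)} (hc : c ∈ B) :
    IsCubeOf C B ↔ ∃ Y, B = cubeAt c Y ∧ cubeAt c Y ⊆ C := by
  simp only [IsCubeOf, IsCube, isCubeS_iff_eq_cubeAt hc]
  constructor
  · rintro ⟨hBC, Y, rfl⟩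
    exact ⟨Y, rfl, hBC⟩
  · rintro ⟨Y, rfl, hYC⟩
    exact ⟨hYC, Y, rfl⟩

theorem isCornerOf_iff :
    IsCornerOf C c ↔ ∃ Y, cubeAt c Y ⊆ C ∧ ∀ S, cubeAt c S ⊆ C → S ⊆ Y := by
  constructor
  · rintro ⟨-, B, ⟨hBmax, hcB⟩, huniq⟩
    obtain ⟨Y, rfl, hYC⟩ := (isCubeOf_iff_of_mem hcB).1 hBmax.1
    refine ⟨Y, hYC, fun S hS ↦ ?_⟩
    obtain ⟨B', hB'max, hSB'⟩ :=
      IsCubeOf.exists_isMaximalCubeOf ⟨hS, S, isCubeS_cubeAt c S⟩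
    rw [← cubeAt_subset_cubeAt_iff, ← huniq B' ⟨hB'max, hSB' (self_mem_cubeAt c S)⟩]
    exact hSB'
  · rintro ⟨Y, hYC, hmax⟩
    have hsub : ∀ B, IsCubeOf C B → c ∈ B → B ⊆ cubeAt c Y := fun B hB hcB ↦ by
      obtain ⟨S, rfl, hSC⟩ := (isCubeOf_iff_of_mem hcB).1 hB
      exact cubeAt_subset_cubeAt_iff.2 (hmax S hSC)
    have hYcube : IsCubeOf C (cubeAt c Y) := ⟨hYC, Y, isCubeS_cubeAt c Y⟩
    refine ⟨hYC (self_mem_cubeAt c Y), cubeAt c Y, ⟨⟨hYcube, fun B hB hYB ↦ ?_⟩,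
      self_mem_cubeAt c Y⟩, fun B ⟨hBmax, hcB⟩ ↦ hBmax.2 _ hYcube (hsub B hBmax.1 hcB)⟩
    exact hYB.antisymm (hsub B hB (hYB (self_mem_cubeAt c Y)))

end Corners

section EdgeDirs

variable {α : Type} [Fintype α] [DecidableEq α]

def edgeDirs (D : Finset (Finset α)) (c : Finset α) : Finset α := {x | c ∆ {x} ∈ D}

theorem mem_edgeDirs {D : Finset (Finset α)} {c : Finset α} {x : α} :
    x ∈ edgeDirs D c ↔ c ∆ {x} ∈ D := by
  simp [edgeDirs]

theorem isCornerOf_iff_cubeAt_edgeDirs_subset {D : Finset (Finset α)} {c : Finset α} :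
    IsCornerOf D c ↔ cubeAt c (edgeDirs D c) ⊆ D := by
  rw [isCornerOf_iff]
  constructor
  · rintro ⟨Y, hYD, hmax⟩
    refine (cubeAt_subset_cubeAt_iff.2 fun x hx ↦ ?_).trans hYD
    refine singleton_subset_iff.1 (hmax {x} ?_)
    rw [cubeAt_singleton]
    exact insert_subset (hYD (self_mem_cubeAt c Y)) (singleton_subset_iff.2 (mem_edgeDirs.1 hx))
  · intro h
    exact ⟨_, h, fun S hS x hx ↦ mem_edgeDirs.2 (hS (symmDiff_singleton_mem_cubeAt.2 hx))⟩

end EdgeDirs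

section Shattering

variable {α : Type} [DecidableEq α]

theorem Finset.Shatters.exists_mem_and_exists_not_mem {D : Finset (Finset α)} {Y : Finset α}
    {x : α} (hY : D.Shatters Y) (hx : x ∈ Y) : (∃ u ∈ D, x ∈ u) ∧ ∃ u ∈ D, x ∉ u := by
  obtain ⟨u, hu, hYu⟩ := hY.exists_inter_eq_singleton hx
  obtain ⟨u', hu', hYu'⟩ := hY (empty_subset Y)
  exact ⟨⟨u, hu, (mem_inter.1 (hYu ▸ mem_singleton_self x)).2⟩, u', hu',
    fun hxu' ↦ notMem_empty x (hYu' ▸ mem_inter.2 ⟨hx, hxu'⟩)⟩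

theorem card_shatterer_filter_add_le (D : Finset (Finset α)) (x : α) :
    #{u ∈ D | x ∈ u}.shatterer + #{u ∈ D | x ∉ u}.shatterer ≤ #D.shatterer := by
  set S₁ := {u ∈ D | x ∈ u}.shatterer
  set S₀ := {u ∈ D | x ∉ u}.shatterer
  have hx : ∀ Y ∈ S₁ ∪ S₀, x ∉ Y := by
    intro Y hY hxY
    rcases mem_union.1 hY with hY | hY
    · obtain ⟨u, hu, hxu⟩ := ((mem_shatterer.1 hY).exists_mem_and_exists_not_mem hxY).2
      exact hxu (mem_filter.1 hu).2
    · obtain ⟨u, hu, hxu⟩ := ((mem_shatterer.1 hY).exists_mem_and_exists_not_mem hxY).1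
      exact (mem_filter.1 hu).2 hxu
  have hinsert : ∀ Y ∈ S₁ ∩ S₀, insert x Y ∈ D.shatterer := by
    intro Y hY
    obtain ⟨hY₁, hY₀⟩ := mem_inter.1 hY
    refine mem_shatterer.2 fun t ht ↦ ?_
    rw [subset_insert_iff] at ht
    by_cases hxt : x ∈ t
    · obtain ⟨u, hu, hYu⟩ := mem_shatterer.1 hY₁ ht
      obtain ⟨huD, hxu⟩ := mem_filter.1 hu
      exact ⟨u, huD, by rw [insert_inter_of_mem hxu, hYu, insert_erase hxt]⟩
    · rw [erase_eq_of_notMem hxt] at ht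
      obtain ⟨u, hu, hYu⟩ := mem_shatterer.1 hY₀ ht
      obtain ⟨huD, hxu⟩ := mem_filter.1 hu
      exact ⟨u, huD, by rw [insert_inter_of_notMem hxu, hYu]⟩
  have hdisj : Disjoint (S₁ ∪ S₀) ((S₁ ∩ S₀).image (insert x)) := by
    refine disjoint_left.2 fun Y hY hY' ↦ ?_
    obtain ⟨Y', -, rfl⟩ := mem_image.1 hY'
    exact hx _ hY (mem_insert_self x Y')
  have hinj : #((S₁ ∩ S₀).image (insert x)) = #(S₁ ∩ S₀) := by
    refine card_image_of_injOn fun Y hY Y' hY' h ↦ ?_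
    have hxY := hx Y (mem_union_left _ (mem_inter.1 hY).1)
    have hxY' := hx Y' (mem_union_left _ (mem_inter.1 hY').1)
    rw [← erase_insert hxY, ← erase_insert hxY']
    exact congrArg (·.erase x) h
  calc #S₁ + #S₀ = #(S₁ ∪ S₀) + #(S₁ ∩ S₀) := (card_union_add_card_inter _ _).symm
    _ = #(S₁ ∪ S₀ ∪ (S₁ ∩ S₀).image (insert x)) := by rw [card_union_of_disjoint hdisj, hinj]
    _ ≤ #D.shatterer := card_le_card <| union_subset
        (union_subset (shatterer_mono (filter_subset _ _)) (shatterer_mono (filter_subset _ _)))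
        (image_subset_iff.2 hinsert)

end Shattering

section Ample

variable {α : Type} [Fintype α] [DecidableEq α] {D : Finset (Finset α)}

theorem shatteredSets_eq_shatterer_s18 (D : Finset (Finset α)) : shatteredSets D = D.shatterer := by
  ext Y
  simp only [shatteredSets, _root_.Shatters, mem_filter, mem_univ, true_and, mem_powerset,
    mem_shatterer, Finset.Shatters, inter_comm Y]

theorem isAmple_iff : IsAmple D ↔ #D.shatterer ≤ #D := by
  rw [IsAmple, shatteredSets_eq_shatterer_s18]
  exact ⟨fun h ↦ h.ge, fun h ↦ (card_le_card_shatterer D).antisymm h⟩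

theorem IsAmple.filter_mem (hD : IsAmple D) (x : α) :
    IsAmple {u ∈ D | x ∈ u} ∧ IsAmple {u ∈ D | x ∉ u} := by
  simp only [isAmple_iff] at hD ⊢
  have := card_shatterer_filter_add_le D x
  have := card_le_card_shatterer {u ∈ D | x ∈ u}
  have := card_le_card_shatterer {u ∈ D | x ∉ u}
  have := card_filter_add_card_filter_not (s := D) (x ∈ ·)
  omega

theorem IsAmple.filter_agree (hD : IsAmple D) (v T : Finset α) :
    IsAmple {u ∈ D | ∀ y ∈ T, y ∈ u ↔ y ∈ v} := by
  induction T using Finset.induction_on with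
  | empty => simpa using hD
  | insert x T _ ih =>
    by_cases hxv : x ∈ v
    · convert (ih.filter_mem x).1 using 1
      ext u
      simp [filter_filter, hxv, and_comm]
    · convert (ih.filter_mem x).2 using 1
      ext u
      simp [filter_filter, hxv, and_comm]

theorem IsAmple.filter_mem_cubeAt (hD : IsAmple D) (v S : Finset α) :
    IsAmple {u ∈ D | u ∈ cubeAt v S} := by
  convert hD.filter_agree v Sᶜ using 3 with u
  simp only [mem_cubeAt_s18, subset_iff, mem_symmDiff, mem_compl]
  constructor
  · intro h y hy
    have := @h y
    tauto
  · intro h y hy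
    by_contra hyS
    have := h y hyS
    tauto

theorem card_symmDiff_le_one_of_isAmple_pair {a b : Finset α}
    (h : IsAmple ({a, b} : Finset (Finset α))) : #(a ∆ b) ≤ 1 := by
  have hsingle : ∀ y ∈ a ∆ b, ({a, b} : Finset (Finset α)).Shatters {y} := by
    have key : ∀ {u u' : Finset α} {y : α}, y ∈ u → y ∉ u' →
        ({u, u'} : Finset (Finset α)).Shatters {y} := fun hu hu' t ht ↦ by
      rcases subset_singleton_iff.1 ht with rfl | rfl
      · exact ⟨_, mem_insert_of_mem (mem_singleton_self _), singleton_inter_of_notMem hu'⟩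
      · exact ⟨_, mem_insert_self _ _, singleton_inter_of_mem hu⟩
    intro y hy
    rcases mem_symmDiff.1 hy with ⟨hya, hyb⟩ | ⟨hyb, hya⟩
    · exact key hya hyb
    · exact pair_comm a b ▸ key hyb hya
  have hsub : insert ∅ ((a ∆ b).map ⟨singleton, singleton_injective⟩) ⊆
      ({a, b} : Finset (Finset α)).shatterer := by
    refine insert_subset (mem_shatterer.2 (shatters_empty.2 (insert_nonempty _ _))) ?_
    simpa [subset_iff] using hsingle
  have := card_le_card hsub
  rw [card_insert_of_notMem (by simp), card_map] at this
  have := isAmple_iff.1 h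
  have := card_le_two (a := a) (b := b)
  omega

theorem IsAmple.exists_symmDiff_singleton_mem (hD : IsAmple D) {u v S : Finset α} (hv : v ∈ D)
    (hu : u ∈ D) (huS : u ∈ cubeAt v S) (huv : u ≠ v) : ∃ y ∈ S, v ∆ {y} ∈ D := by
  set E := {w ∈ D | w ∈ cubeAt v S}.erase v
  obtain ⟨w, hwE, hmin⟩ := E.exists_min_image (fun w ↦ #(v ∆ w)) ⟨u, by simp [E, huv, hu, huS]⟩
  obtain ⟨hwv, hwD, hwS⟩ : w ≠ v ∧ w ∈ D ∧ w ∈ cubeAt v S := by simpa [E] using hwE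
  -- a closest concept `w ≠ v` in the cube spans a face meeting `D` only in `v` and `w`
  have hpair : {z ∈ D | z ∈ cubeAt v (v ∆ w)} = {v, w} := by
    ext z
    simp only [mem_filter, mem_insert, mem_singleton]
    constructor
    · rintro ⟨hzD, hzw⟩
      refine or_iff_not_imp_left.2 fun hzv ↦ ?_
      have hzE : z ∈ E := mem_erase.2 ⟨hzv, mem_filter.2 ⟨hzD,
        cubeAt_subset_cubeAt_iff.2 (mem_cubeAt_s18.1 hwS) hzw⟩⟩
      exact symmDiff_right_injective v
        (eq_of_subset_of_card_le (mem_cubeAt_s18.1 hzw) (hmin z hzE))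
    · rintro (rfl | rfl)
      · exact ⟨hv, self_mem_cubeAt z _⟩
      · exact ⟨hwD, mem_cubeAt_s18.2 subset_rfl⟩
  have hle := card_symmDiff_le_one_of_isAmple_pair (hpair ▸ hD.filter_mem_cubeAt v (v ∆ w))
  obtain ⟨y, hy⟩ := card_eq_one.1 (hle.antisymm (card_pos.2 (symmDiff_nonempty.2 hwv.symm)))
  refine ⟨y, mem_cubeAt_s18.1 hwS (hy ▸ mem_singleton_self y), ?_⟩
  rwa [← hy, symmDiff_symmDiff_cancel_left]

theorem IsAmple.erase_of_isCornerOf (hD : IsAmple D) {c : Finset α} (hc : IsCornerOf D c) :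
    IsAmple (D.erase c) := by
  set Y := edgeDirs D c
  have hYD : cubeAt c Y ⊆ D := isCornerOf_iff_cubeAt_edgeDirs_subset.1 hc
  have hcD : c ∈ D := hYD (self_mem_cubeAt c Y)
  have hsh : D.Shatters Y := fun t ht ↦ ⟨c \ Y ∪ t,
    hYD (mem_image_of_mem _ (mem_powerset.2 ht)),
    by rw [inter_union_distrib_left, inter_sdiff_self, empty_union, inter_eq_right.2 ht]⟩
  -- `c` is the only concept of `D` with trace `Y ∩ c` on `Y`
  have hnsh : ¬ (D.erase c).Shatters Y := by
    intro h
    obtain ⟨c', hc', hYc'⟩ := h (inter_subset_left : Y ∩ c ⊆ Y)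
    obtain ⟨hc'c, hc'D⟩ := mem_erase.1 hc'
    have hc'Y : c' ∈ cubeAt c Yᶜ := mem_cubeAt_s18.2 fun y hy ↦ mem_compl.2 fun hyY ↦ by
      have := congrArg (y ∈ ·) hYc'
      simp only [mem_inter, hyY, true_and, eq_iff_iff] at this
      rcases mem_symmDiff.1 hy with h | h <;> tauto
    obtain ⟨y, hyY, hyD⟩ := hD.exists_symmDiff_singleton_mem hcD hc'D hc'Y hc'c
    exact mem_compl.1 hyY (mem_edgeDirs.2 hyD)
  have hlt : #(D.erase c).shatterer < #D.shatterer := card_lt_card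
    ⟨shatterer_mono (erase_subset c D), fun h ↦ hnsh (mem_shatterer.1 (h (mem_shatterer.2 hsh)))⟩
  rw [isAmple_iff] at hD ⊢
  rw [card_erase_of_mem hcD]
  omega

end Ample

section Peeling

variable {α : Type} [DecidableEq α]

-- For `c = c_i` this is the level set `C_i` of the peeling `l`.
def levelSet (l : List (Finset α)) (c : Finset α) : Finset (Finset α) :=
  (l.take (l.idxOf c + 1)).toFinset

variable {l : List (Finset α)} {c d : Finset α}

theorem mem_levelSet : d ∈ levelSet l c ↔ d ∈ l ∧ l.idxOf d ≤ l.idxOf c := by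
  rw [levelSet, List.mem_toFinset]
  constructor
  · intro h
    have hd := List.mem_of_mem_take h
    exact ⟨hd, Nat.lt_succ_iff.1 ((List.mem_take_iff_idxOf_lt hd).1 h)⟩
  · rintro ⟨hd, h⟩
    exact (List.mem_take_iff_idxOf_lt hd).2 (Nat.lt_succ_of_le h)

theorem levelSet_subset (l : List (Finset α)) (c : Finset α) : levelSet l c ⊆ l.toFinset :=
  fun _ hd ↦ List.mem_toFinset.2 (mem_levelSet.1 hd).1

theorem levelSet_append_singleton (hd : d ∈ l) :
    levelSet (l ++ [c]) d = levelSet l d := by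
  ext e
  by_cases he : e ∈ l
  · simp [mem_levelSet, he, hd, List.idxOf_append_of_mem]
  · have := List.idxOf_lt_length_iff.2 hd
    simp [mem_levelSet, he, hd, List.idxOf_append_of_mem, List.idxOf_append_of_notMem]
    omega

theorem levelSet_append_singleton_self (hc : c ∉ l) :
    levelSet (l ++ [c]) c = (l ++ [c]).toFinset := by
  rw [levelSet, List.idxOf_append_of_notMem hc, List.take_of_length_le (by simp)]

theorem isCornerPeeling_iff :
    IsCornerPeeling l ↔ l.Nodup ∧ ∀ c ∈ l, IsCornerOf (levelSet l c) c := by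
  refine and_congr_right fun hl ↦ ⟨fun h c hc ↦ ?_, fun h i hi ↦ ?_⟩
  · have hi := List.idxOf_lt_length_iff.2 hc
    simpa [levelSet, List.getElem_idxOf hi] using h _ hi
  · simpa [levelSet, hl.idxOf_getElem] using h _ (List.getElem_mem hi)

theorem isCornerPeeling_append_singleton_iff :
    IsCornerPeeling (l ++ [c]) ↔
      IsCornerPeeling l ∧ c ∉ l ∧ IsCornerOf (l ++ [c]).toFinset c := by
  by_cases hc : c ∈ l
  · simp [isCornerPeeling_iff, hc, List.nodup_append]
  · have hlevel : (∀ d ∈ l, IsCornerOf (levelSet (l ++ [c]) d) d) ↔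
        ∀ d ∈ l, IsCornerOf (levelSet l d) d :=
      forall₂_congr fun d hd ↦ by rw [levelSet_append_singleton hd]
    simp only [isCornerPeeling_iff, List.nodup_append, List.forall_mem_append,
      List.forall_mem_singleton, levelSet_append_singleton_self hc, hlevel, hc,
      List.nodup_singleton, not_false_eq_true, true_and]
    exact ⟨fun ⟨⟨hl, _⟩, h, hcorner⟩ ↦ ⟨⟨hl, h⟩, hcorner⟩,
      fun ⟨⟨hl, h⟩, hcorner⟩ ↦ ⟨⟨hl, fun a ha h ↦ hc (h ▸ ha)⟩, h, hcorner⟩⟩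

end Peeling

section Orientation

variable {α : Type} [DecidableEq α]

def orientedEdge (C : Finset (Finset α)) (r : Finset α → Finset α) (a b : Finset α) : Prop :=
  a ∈ C ∧ b ∈ C ∧ hdist a b = 1 ∧ (a \ b) ∪ (b \ a) ⊆ r a

variable {C : Finset (Finset α)} {r : Finset α → Finset α} {a b : Finset α}

theorem orientedEdge_iff :
    orientedEdge C r a b ↔ a ∈ C ∧ b ∈ C ∧ ∃ x ∈ r a, b = a ∆ {x} := by
  change a ∈ C ∧ b ∈ C ∧ #(a ∆ b) = 1 ∧ a ∆ b ⊆ r a ↔ _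
  simp only [card_eq_one]
  constructor
  · rintro ⟨ha, hb, ⟨x, hx⟩, hr⟩
    exact ⟨ha, hb, x, singleton_subset_iff.1 (hx ▸ hr), symmDiff_eq_iff_eq_symmDiff.1 hx⟩
  · rintro ⟨ha, hb, x, hx, rfl⟩
    rw [symmDiff_symmDiff_cancel_left]
    exact ⟨ha, hb, ⟨x, rfl⟩, singleton_subset_iff.2 hx⟩

theorem orientedEdge_mono {D : Finset (Finset α)} (hDC : D ⊆ C) :
    orientedEdge D r a b → orientedEdge C r a b := fun h ↦ ⟨hDC h.1, hDC h.2.1, h.2.2⟩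

end Orientation

section Forward

variable {α : Type} [Fintype α] [DecidableEq α]

theorem IsCornerPeeling.isAmple_levelSet {l : List (Finset α)} (hl : IsCornerPeeling l)
    (hC : IsAmple l.toFinset) {c : Finset α} (hc : c ∈ l) : IsAmple (levelSet l c) := by
  induction l using List.reverseRecOn with
  | nil => simp at hc
  | append_singleton l c' ih =>
    obtain ⟨hl', hc'l, hcorner⟩ := isCornerPeeling_append_singleton_iff.1 hl
    rcases List.mem_append.1 hc with hc | hc
    · rw [levelSet_append_singleton hc]
      refine ih hl' ?_ hc
      simpa [hc'l] using hC.erase_of_isCornerOf hcorner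
    · rw [List.mem_singleton.1 hc, levelSet_append_singleton_self hc'l]
      exact hC

-- When `c` is a corner of `levelSet l c`, this is the support of its maximal cube there.
def peelingMap (l : List (Finset α)) (c : Finset α) : Finset α := edgeDirs (levelSet l c) c

variable {l : List (Finset α)}

theorem IsCornerPeeling.condC1 (hl : IsCornerPeeling l) : CondC1 l.toFinset (peelingMap l) :=
  fun c hc ↦ (isCornerOf_iff_cubeAt_edgeDirs_subset.1
    ((isCornerPeeling_iff.1 hl).2 c (List.mem_toFinset.1 hc))).trans (levelSet_subset l c)

theorem idxOf_lt_of_orientedEdge_peelingMap {a b : Finset α}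
    (h : orientedEdge l.toFinset (peelingMap l) a b) : l.idxOf b < l.idxOf a := by
  obtain ⟨-, -, x, hx, rfl⟩ := orientedEdge_iff.1 h
  obtain ⟨hxl, hle⟩ := mem_levelSet.1 (mem_edgeDirs.1 hx)
  exact hle.lt_of_ne fun h ↦ symmDiff_singleton_ne a x ((List.idxOf_inj hxl).1 h)

theorem not_transGen_orientedEdge_peelingMap (c : Finset α) :
    ¬ Relation.TransGen (orientedEdge l.toFinset (peelingMap l)) c c := by
  suffices ∀ {a b}, Relation.TransGen (orientedEdge l.toFinset (peelingMap l)) a b →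
      l.idxOf b < l.idxOf a from fun h ↦ lt_irrefl _ (this h)
  intro a b h
  induction h with
  | single h => exact idxOf_lt_of_orientedEdge_peelingMap h
  | tail _ h ih => exact (idxOf_lt_of_orientedEdge_peelingMap h).trans ih

theorem IsCornerPeeling.condC2 (hl : IsCornerPeeling l) (hC : IsAmple l.toFinset) :
    CondC2 l.toFinset (peelingMap l) := by
  intro B Y hB hBY
  have hmem : ∀ w ∈ B, w ∈ l := fun w hw ↦ List.mem_toFinset.1 (hB hw)
  have hBne : B.Nonempty := by
    obtain ⟨t, -, rfl⟩ := hBY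
    exact ⟨_, mem_image_of_mem _ (empty_mem_powerset Y)⟩
  -- the sink of `B` is its first concept in the peeling
  obtain ⟨v, hvB, hmin⟩ := B.exists_min_image l.idxOf hBne
  refine ⟨v, ⟨hvB, eq_empty_of_forall_notMem fun x hx ↦ ?_⟩, ?_⟩
  · obtain ⟨hxr, hxY⟩ := mem_inter.1 hx
    obtain ⟨hxl, hle⟩ := mem_levelSet.1 (mem_edgeDirs.1 hxr)
    have hxB : v ∆ {x} ∈ B :=
      (isCubeS_iff_eq_cubeAt hvB).1 hBY ▸ symmDiff_singleton_mem_cubeAt.2 hxY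
    exact symmDiff_singleton_ne v x ((List.idxOf_inj hxl).1 (hle.antisymm (hmin _ hxB)))
  · rintro v' ⟨hv'B, hv'Y⟩
    by_contra hne
    have hv'l := hmem v' hv'B
    obtain ⟨y, hyY, hy⟩ := (hl.isAmple_levelSet hC hv'l).exists_symmDiff_singleton_mem
      (mem_levelSet.2 ⟨hv'l, le_rfl⟩) (mem_levelSet.2 ⟨hmem v hvB, hmin v' hv'B⟩)
      ((isCubeS_iff_eq_cubeAt hv'B).1 hBY ▸ hvB) (Ne.symm hne)
    exact notMem_empty y (hv'Y ▸ mem_inter.2 ⟨mem_edgeDirs.2 hy, hyY⟩)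

end Forward

section Backward

variable {α : Type} [DecidableEq α] {C : Finset (Finset α)} {r : Finset α → Finset α}

theorem Finset.exists_source_of_acyclic {β : Type*} {R : β → β → Prop} {s : Finset β}
    (hs : s.Nonempty) (hR : ∀ b, ¬ Relation.TransGen R b b) : ∃ c ∈ s, ∀ b ∈ s, ¬ R b c := by
  let R' : s → s → Prop := fun a b ↦ Relation.TransGen R a b
  have : IsTrans s R' := ⟨fun _ _ _ ↦ Relation.TransGen.trans⟩
  have : Std.Irrefl R' := ⟨fun a ↦ hR a⟩
  obtain ⟨⟨c, hc⟩, -, hmin⟩ :=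
    (Finite.wellFounded_of_trans_of_irrefl R').has_min Set.univ ⟨⟨_, hs.choose_spec⟩, trivial⟩
  exact ⟨c, hc, fun b hb hbc ↦ hmin ⟨b, hb⟩ trivial (.single hbc)⟩

theorem CondC2.mono (h : CondC2 C r) {D : Finset (Finset α)} (hDC : D ⊆ C) : CondC2 D r :=
  fun B Y hB hBY ↦ h B Y (hB.trans hDC) hBY

theorem CondC2.mem_or_mem (h : CondC2 C r) {a : Finset α} {x : α} (ha : a ∈ C)
    (hb : a ∆ {x} ∈ C) : x ∈ r a ∨ x ∈ r (a ∆ {x}) := by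
  by_contra! hx
  have hsub : cubeAt a {x} ⊆ C := by
    rw [cubeAt_singleton]
    exact insert_subset ha (singleton_subset_iff.2 hb)
  obtain ⟨w, -, hw⟩ := h _ _ hsub (isCubeS_cubeAt a {x})
  have ha' := hw a ⟨self_mem_cubeAt a {x}, inter_singleton_of_notMem hx.1⟩
  have hb' := hw (a ∆ {x})
    ⟨symmDiff_singleton_mem_cubeAt.2 (mem_singleton_self x), inter_singleton_of_notMem hx.2⟩
  exact symmDiff_singleton_ne a x (hb'.trans ha'.symm)

theorem CondC2.subset_of_source (h : CondC2 C r) {c S : Finset α}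
    (hsrc : ∀ b, ¬ orientedEdge C r b c) (hS : cubeAt c S ⊆ C) : S ⊆ r c := by
  intro x hx
  have hc := hS (self_mem_cubeAt c S)
  have hb := hS (symmDiff_singleton_mem_cubeAt.2 hx)
  refine (h.mem_or_mem hc hb).resolve_right fun hxb ↦ hsrc _ <|
    orientedEdge_iff.2 ⟨hb, hc, x, hxb, (symmDiff_symmDiff_cancel_right _ _).symm⟩

theorem CondC2.card_filter_inter_subset (h : CondC2 C r) {c₀ Y T : Finset α}
    (hQ : cubeAt c₀ Y ⊆ C) (hT : T ⊆ Y) : #{v ∈ cubeAt c₀ Y | r v ∩ Y ⊆ T} = 2 ^ #T := by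
  have hsink : ∀ v, r v ∩ Y ⊆ T ↔ r v ∩ (Y \ T) = ∅ := fun v ↦ by
    rw [← sdiff_eq_empty_iff_subset, inter_sdiff_assoc]
  -- the vertices counted are the sinks of the faces of `cubeAt c₀ Y` with support `Y \ T`
  rw [← card_powerset]
  refine card_nbij (· ∩ T) (fun v _ ↦ mem_powerset.2 inter_subset_right) ?_ ?_
  · intro v hv w hw hvw
    simp only [mem_coe, mem_filter, hsink] at hv hw
    obtain ⟨_, -, hs⟩ := h _ _ ((cubeAt_subset_of_mem hv.1 sdiff_subset).trans hQ)
      (isCubeS_cubeAt v (Y \ T))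
    exact (hs v ⟨self_mem_cubeAt v _, hv.2⟩).trans
      (hs w ⟨(mem_cubeAt_sdiff_iff hv.1 hw.1).2 hvw, hw.2⟩).symm
  · intro s hs
    have hsT := mem_powerset.1 hs
    set u := c₀ \ T ∪ s
    have hu : u ∈ cubeAt c₀ Y := mem_cubeAt_s18.2 fun y hy ↦ by
      have := @hsT y
      have := @hT y
      simp only [u, mem_symmDiff, mem_union, mem_sdiff] at hy
      tauto
    have huT : u ∩ T = s := by
      ext y
      have := @hsT y
      simp only [u, mem_inter, mem_union, mem_sdiff]
      tauto
    have hface := cubeAt_subset_of_mem hu (sdiff_subset : Y \ T ⊆ Y)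
    obtain ⟨w, ⟨hw, hwr⟩, -⟩ := h _ _ (hface.trans hQ) (isCubeS_cubeAt u (Y \ T))
    refine ⟨w, ?_, ?_⟩
    · simp only [mem_coe, mem_filter, hsink]
      exact ⟨hface hw, hwr⟩
    · rw [← huT]
      exact ((mem_cubeAt_sdiff_iff hu (hface hw)).1 hw).symm

theorem CondC2.card_filter_inter_eq (h : CondC2 C r) {c₀ Y T : Finset α}
    (hQ : cubeAt c₀ Y ⊆ C) (hT : T ⊆ Y) : #{v ∈ cubeAt c₀ Y | r v ∩ Y = T} = 1 := by
  induction T using Finset.strongInduction with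
  | H T ih =>
    have hsum : ∑ T' ∈ T.powerset, #{v ∈ cubeAt c₀ Y | r v ∩ Y = T'} = 2 ^ #T := by
      rw [← h.card_filter_inter_subset hQ hT, card_eq_sum_card_fiberwise (f := (r · ∩ Y))
        fun v hv ↦ mem_powerset.2 (mem_filter.1 hv).2]
      refine sum_congr rfl fun T' hT' ↦ ?_
      rw [filter_filter]
      exact congrArg card <| filter_congr fun v _ ↦
        ⟨fun hv ↦ ⟨show r v ∩ Y ⊆ T from hv ▸ mem_powerset.1 hT', hv⟩, And.right⟩
    have hproper : ∀ T' ∈ T.powerset.erase T, #{v ∈ cubeAt c₀ Y | r v ∩ Y = T'} = 1 := by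
      intro T' hT'
      obtain ⟨hne, hsub⟩ := mem_erase.1 hT'
      rw [mem_powerset] at hsub
      exact ih T' (ssubset_of_subset_of_ne hsub hne) (hsub.trans hT)
    rw [← add_sum_erase _ _ (mem_powerset_self T), sum_congr rfl hproper, sum_const, smul_eq_mul,
      mul_one, card_erase_of_mem (mem_powerset_self T), card_powerset] at hsum
    have := Nat.one_le_two_pow (n := #T)
    omega

theorem CondC2.eq_of_subset_of_subset (h : CondC2 C r) {c₀ Y u v : Finset α}
    (hQ : cubeAt c₀ Y ⊆ C) (hu : u ∈ cubeAt c₀ Y) (hv : v ∈ cubeAt c₀ Y) (hYu : Y ⊆ r u)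
    (hYv : Y ⊆ r v) : u = v :=
  card_le_one.1 (h.card_filter_inter_eq hQ subset_rfl).le u
    (mem_filter.2 ⟨hu, inter_eq_right.2 hYu⟩) v (mem_filter.2 ⟨hv, inter_eq_right.2 hYv⟩)

theorem CondC1.erase_source (h₁ : CondC1 C r) (h₂ : CondC2 C r) {c : Finset α}
    (hsrc : ∀ b, ¬ orientedEdge C r b c) : CondC1 (C.erase c) r := by
  intro d hd e he
  obtain ⟨hdc, hdC⟩ := mem_erase.1 hd
  refine mem_erase.2 ⟨?_, h₁ d hdC he⟩
  rintro rfl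
  have hrd : r d ⊆ r e :=
    h₂.subset_of_source hsrc ((cubeAt_subset_of_mem he subset_rfl).trans (h₁ d hdC))
  exact hdc (h₂.eq_of_subset_of_subset (h₁ d hdC) (self_mem_cubeAt d _) he subset_rfl hrd)

theorem isCornerOf_of_source (h₁ : CondC1 C r) (h₂ : CondC2 C r) {c : Finset α} (hc : c ∈ C)
    (hsrc : ∀ b, ¬ orientedEdge C r b c) : IsCornerOf C c :=
  isCornerOf_iff.2 ⟨r c, h₁ c hc, fun _ hS ↦ h₂.subset_of_source hsrc hS⟩

theorem Dismantlable.of_erase {c : Finset α} (hc : IsCornerOf C c)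
    (h : Dismantlable (C.erase c)) : Dismantlable C := by
  obtain ⟨l, hlC, hl⟩ := h
  have hcl : c ∉ l := fun hcl ↦ (mem_erase.1 (hlC ▸ List.mem_toFinset.2 hcl)).1 rfl
  have hC : (l ++ [c]).toFinset = C := by
    ext d
    by_cases hd : d = c <;> simp [hlC, hd, hc.1]
  exact ⟨l ++ [c], hC, isCornerPeeling_append_singleton_iff.2 ⟨hl, hcl, hC ▸ hc⟩⟩

theorem dismantlable_of_condC1_of_condC2 (h₁ : CondC1 C r) (h₂ : CondC2 C r)
    (hacyc : ∀ c, ¬ Relation.TransGen (orientedEdge C r) c c) : Dismantlable C := by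
  induction C using Finset.strongInduction with
  | H C ih =>
    rcases C.eq_empty_or_nonempty with rfl | hne
    · exact ⟨[], rfl, List.nodup_nil, fun i h ↦ absurd h (Nat.not_lt_zero i)⟩
    obtain ⟨c, hc, hmin⟩ := C.exists_source_of_acyclic hne hacyc
    have hsrc : ∀ b, ¬ orientedEdge C r b c := fun b hb ↦ hmin b hb.1 hb
    exact Dismantlable.of_erase (isCornerOf_of_source h₁ h₂ hc hsrc) <|
      ih _ (erase_ssubset hc) (h₁.erase_source h₂ hsrc) (h₂.mono (erase_subset c C))
        fun a ha ↦ hacyc a <|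
          Relation.TransGen.mono (fun _ _ ↦ orientedEdge_mono (erase_subset c C)) _ _ ha

end Backward

/-- An ample class admits a corner peeling if and only if there is a map
`r` satisfying (C1) and (C2) whose induced orientation of the one-inclusion graph
(directing the `x`-edge `c c'` from `c` to `c'` iff `x ∈ r c`) is acyclic. -/
theorem stmt_18 (C : Finset (Finset X)) (hC : IsAmple C) :
    Dismantlable C ↔
      ∃ r : Finset X → Finset X, CondC1 C r ∧ CondC2 C r ∧
        ∀ c : Finset X, ¬ Relation.TransGen
          (fun a b => a ∈ C ∧ b ∈ C ∧ hdist a b = 1 ∧ (a \ b) ∪ (b \ a) ⊆ r a) c c := by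
  constructor
  · rintro ⟨l, rfl, hl⟩
    exact ⟨peelingMap l, hl.condC1, hl.condC2 hC, not_transGen_orientedEdge_peelingMap⟩
  · rintro ⟨r, h₁, h₂, hacyc⟩
    exact dismantlable_of_condC1_of_condC2 h₁ h₂ hacyc
end
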